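/- arXiv:1807.10468 — 5 statements merged into one kernel-verified Lean document; each statement's English description precedes it below -/
import Mathlib

section
/- Every finite subtraction game (simple take-away game on heaps with a finite subtraction set L of positive integers) has an ultimately periodic Grundy sequence: there exist T > 0 and k₀ such that for all k ≥ k₀, G(k+T) = G(k), where G(k) denotes the Grundy value of a heap of k counters. -/
/-- The minimum excludant of a set of naturals. -/
noncomputable def mex (s : Set ℕ) : ℕ := sInf {n | n ∉ s}

/-- The Grundy value of a heap of `k` counters in the subtraction game with
subtraction set `L` (a set of positive integers): a move removes `m ∈ L`
counters with `m ≤ k`; Grundy values via the mex recursion. -/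
noncomputable def heapGrundy (L : Set ℕ) (k : ℕ) : ℕ :=
  mex (Set.range fun m : {m : ℕ // m ∈ L ∧ 0 < m ∧ m ≤ k} =>
    have : k - m.1 < k := Nat.sub_lt (Nat.lt_of_lt_of_le m.2.2.1 m.2.2.2) m.2.2.1
    heapGrundy L (k - m.1))
termination_by k
decreasing_by exact this

lemma mex_le_of_subset_finset (s : Set ℕ) (t : Finset ℕ) (h : s ⊆ ↑t) : mex s ≤ t.card := by
  have hex : ∃ n ≤ t.card, n ∉ s := by
    by_contra hc
    push_neg at hc
    have hsub : Finset.range (t.card + 1) ⊆ t := by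
      intro n hn
      rw [Finset.mem_range, Nat.lt_succ_iff] at hn
      exact_mod_cast h (hc n hn)
    have := Finset.card_le_card hsub
    simp at this
  obtain ⟨n, hn, hns⟩ := hex
  exact le_trans (Nat.sInf_le hns) hn

lemma heapGrundy_le (L : Finset ℕ) (k : ℕ) : heapGrundy (↑L : Set ℕ) k ≤ L.card := by
  rw [heapGrundy]
  have h1 : (Set.range fun m : {m : ℕ // m ∈ (↑L : Set ℕ) ∧ 0 < m ∧ m ≤ k} =>
      heapGrundy (↑L : Set ℕ) (k - m.1))
      ⊆ ↑(L.image fun m => heapGrundy (↑L : Set ℕ) (k - m)) := by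
    rintro x ⟨m, rfl⟩
    simp only [Finset.coe_image, Set.mem_image, Finset.mem_coe]
    exact ⟨m.1, m.2.1, rfl⟩
  calc mex _ ≤ (L.image fun m => heapGrundy (↑L : Set ℕ) (k - m)).card :=
        mex_le_of_subset_finset _ _ h1
    _ ≤ L.card := Finset.card_image_le

lemma heapGrundy_eq_of_window (L : Finset ℕ) (d : ℕ) (hd : ∀ m ∈ L, m ≤ d)
    (k k' : ℕ) (hk : d ≤ k) (hk' : d ≤ k')
    (h : ∀ m ∈ L, heapGrundy (↑L : Set ℕ) (k - m) = heapGrundy (↑L : Set ℕ) (k' - m)) :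
    heapGrundy (↑L : Set ℕ) k = heapGrundy (↑L : Set ℕ) k' := by
  rw [heapGrundy, heapGrundy]
  congr 1
  ext x
  constructor
  · rintro ⟨m, rfl⟩
    have hm : m.1 ∈ L := m.2.1
    exact ⟨⟨m.1, m.2.1, m.2.2.1, le_trans (hd m.1 hm) hk'⟩, (h m.1 hm).symm⟩
  · rintro ⟨m, rfl⟩
    have hm : m.1 ∈ L := m.2.1
    exact ⟨⟨m.1, m.2.1, m.2.2.1, le_trans (hd m.1 hm) hk⟩, h m.1 hm⟩

/-- Every finite subtraction game has an ultimately periodic Grundy sequence. -/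
theorem stmt1 (L : Finset ℕ) (hL : 0 ∉ L) :
    ∃ T > 0, ∃ k₀ : ℕ, ∀ k ≥ k₀,
      heapGrundy (↑L : Set ℕ) (k + T) = heapGrundy (↑L : Set ℕ) k := by
  set d := L.sup id with hdd
  have hdm : ∀ m ∈ L, m ≤ d := fun m hm => Finset.le_sup (f := id) hm
  have hpos : ∀ m ∈ L, 0 < m := fun m hm =>
    Nat.pos_of_ne_zero (fun h => hL (h ▸ hm))
  have hbound : ∀ k, heapGrundy (↑L : Set ℕ) k < L.card + 1 :=
    fun k => Nat.lt_succ_of_le (heapGrundy_le L k)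
  let W : ℕ → (Fin d → Fin (L.card + 1)) :=
    fun k j => ⟨heapGrundy (↑L : Set ℕ) (k + j), hbound _⟩
  obtain ⟨a', b', hne, hW⟩ := Finite.exists_ne_map_eq_of_infinite W
  -- wlog a < b
  obtain ⟨a, b, hab, hWab⟩ : ∃ a b, a < b ∧ W a = W b := by
    rcases lt_or_gt_of_ne hne with h | h
    · exact ⟨a', b', h, hW⟩
    · exact ⟨b', a', h, hW.symm⟩
  have key : ∀ k, a ≤ k → heapGrundy (↑L : Set ℕ) (k + (b - a)) = heapGrundy (↑L : Set ℕ) k := by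
    intro k
    induction k using Nat.strong_induction_on with
    | _ k ih =>
      intro hak
      by_cases hc : k < a + d
      · have hj : k - a < d := by omega
        have hfin := congrFun hWab ⟨k - a, hj⟩
        have hv : heapGrundy (↑L : Set ℕ) (a + (k - a)) = heapGrundy (↑L : Set ℕ) (b + (k - a)) :=
          congrArg Fin.val hfin
        have e1 : a + (k - a) = k := by omega
        have e2 : b + (k - a) = k + (b - a) := by omega
        rw [e1, e2] at hv
        exact hv.symm
      · apply heapGrundy_eq_of_window L d hdm _ _ (by omega) (by omega)
        intro m hm
        have hmd := hdm m hm
        have hmp := hpos m hm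
        have e : k + (b - a) - m = (k - m) + (b - a) := by omega
        rw [e]
        exact ih (k - m) (by omega) (by omega)
  exact ⟨b - a, by omega, a, fun k hk => key k hk⟩
end

section
/- Let L be a finite set of positive integers and consider an impartial game whose positions are natural numbers k (the length of an appended path), where from position k (for k ≥ max L) the set of moves is: (a) moving to position k−i for each i ∈ L, (b) moving to one of a fixed finite collection of auxiliary positions whose values at k are given by finitely many ultimately periodic functions of k, and (c) moving to terminal positions whose Grundy values form an ultimately periodic sequence in k. Then the Grundy value of position k is an ultimately periodic function of k. -/
/-- A sequence is ultimately periodic. -/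
def UltPeriodic (f : ℕ → ℕ) : Prop := ∃ T > 0, ∃ k₀ : ℕ, ∀ k ≥ k₀, f (k + T) = f k

lemma mex_le_card (s : Finset ℕ) : mex ↑s ≤ s.card := by
  have : ∃ n ≤ s.card, n ∉ s := by
    by_contra hcon
    push_neg at hcon
    have hsub : Finset.range (s.card + 1) ⊆ s := by
      intro n hn
      exact hcon n (by simpa [Nat.lt_succ_iff] using Finset.mem_range.mp hn)
    have := Finset.card_le_card hsub
    simp at this
  obtain ⟨n, hn, hns⟩ := this
  exact le_trans (Nat.sInf_le (by simpa using hns)) hn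

lemma periodic_mul (u : ℕ → ℕ) (P c : ℕ) (hu : ∀ k ≥ c, u (k + P) = u k) :
    ∀ n k, k ≥ c → u (k + n * P) = u k := by
  intro n
  induction n with
  | zero => simp
  | succ n ih =>
    intro k hk
    have h1 : k + (n + 1) * P = (k + n * P) + P := by ring
    rw [h1, hu _ (le_trans hk (Nat.le_add_right _ _)), ih k hk]

lemma periodic_dvd (u : ℕ → ℕ) (P c T : ℕ) (hu : ∀ k ≥ c, u (k + P) = u k)
    (hPT : P ∣ T) : ∀ k ≥ c, u (k + T) = u k := by
  intro k hk
  obtain ⟨n, rfl⟩ := hPT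
  rw [mul_comm]
  exact periodic_mul u P c hu n k hk

/-- Abstract periodicity theorem: if `f k` (the Grundy value of position `k`) is,
for all `k ≥ K₀`, the mex of: the values `f (k - i)` for `i ∈ L` (moves shortening
the appended path), finitely many auxiliary values `g j k` given by ultimately
periodic functions, and the values `h (k - i)` for `i ∈ L` (moves to terminal
positions, whose Grundy values form an ultimately periodic sequence), then `f`
is ultimately periodic. -/
theorem stmt2 (L : Finset ℕ) (hL : 0 ∉ L) (hLne : L.Nonempty)
    (J : Type) [Fintype J] (g : J → ℕ → ℕ) (hg : ∀ j, UltPeriodic (g j))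
    (h : ℕ → ℕ) (hh : UltPeriodic h)
    (f : ℕ → ℕ) (K₀ : ℕ) (hK₀ : ∀ i ∈ L, i ≤ K₀)
    (hf : ∀ k ≥ K₀, f k =
      mex (↑((L.image fun i => f (k - i)) ∪ (Finset.univ.image fun j => g j k) ∪
        (L.image fun i => h (k - i))) : Set ℕ)) :
    UltPeriodic f := by
  classical
  choose Tg hTg kg hkg using hg
  obtain ⟨Th, hTh, kh, hkh⟩ := hh
  -- common period
  set P : ℕ := Th * ∏ j : J, Tg j with hPdef
  have hPpos : 0 < P := Nat.mul_pos hTh (Finset.prod_pos (fun j _ => hTg j))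
  have hPg : ∀ j : J, Tg j ∣ P :=
    fun j => dvd_mul_of_dvd_right (Finset.dvd_prod_of_mem _ (Finset.mem_univ j)) _
  have hPh : Th ∣ P := dvd_mul_right _ _
  -- common threshold
  set K₁ : ℕ := max kh (Finset.univ.sup kg) with hK₁def
  have gper : ∀ j : J, ∀ k ≥ K₁, g j (k + P) = g j k := by
    intro j k hk
    refine periodic_dvd (g j) (Tg j) (kg j) P (hkg j) (hPg j) k ?_
    exact le_trans (le_trans (Finset.le_sup (Finset.mem_univ j)) (le_max_right _ _)) hk
  have hper : ∀ k ≥ K₁, h (k + P) = h k := by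
    intro k hk
    exact periodic_dvd h Th kh P hkh hPh k (le_trans (le_max_left _ _) hk)
  -- bound on f
  set M : ℕ := 2 * L.card + Fintype.card J with hMdef
  have bound : ∀ k ≥ K₀, f k ≤ M := by
    intro k hk
    rw [hf k hk]
    refine le_trans (mex_le_card _) ?_
    calc ((L.image fun i => f (k - i)) ∪ (Finset.univ.image fun j => g j k) ∪
        (L.image fun i => h (k - i))).card
        ≤ ((L.image fun i => f (k - i)) ∪ (Finset.univ.image fun j => g j k)).card
          + (L.image fun i => h (k - i)).card := Finset.card_union_le _ _
      _ ≤ ((L.image fun i => f (k - i)).card + (Finset.univ.image fun j => g j k).card)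
          + (L.image fun i => h (k - i)).card := by
            exact Nat.add_le_add_right (Finset.card_union_le _ _) _
      _ ≤ (L.card + Fintype.card J) + L.card := by
            refine Nat.add_le_add (Nat.add_le_add (Finset.card_image_le) ?_)
              (Finset.card_image_le)
            simpa using (Finset.card_image_le (s := (Finset.univ : Finset J))
              (f := fun j => g j k))
      _ ≤ M := by rw [hMdef]; omega
  set m : ℕ := L.max' hLne with hmdef
  have hmL : ∀ i ∈ L, i ≤ m := fun i hi => Finset.le_max' L i hi
  have hmem : m ∈ L := L.max'_mem hLne
  have hm1 : 1 ≤ m := Nat.pos_of_ne_zero (fun h0 => hL (h0 ▸ hmem))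
  set K₂ : ℕ := K₀ + K₁ with hK₂def
  -- state function into a finite type
  set S : ℕ → Fin P × (Fin m → Fin (M + 1)) := fun n =>
    (⟨(K₂ + n) % P, Nat.mod_lt _ hPpos⟩,
     fun i => ⟨min (f (K₂ + n + i)) M, Nat.lt_succ_of_le (min_le_right _ _)⟩) with hSdef
  obtain ⟨x, y, hxy, hSxy⟩ := Finite.exists_ne_map_eq_of_infinite S
  -- wlog x < y
  obtain ⟨a, b, hab, hSab⟩ : ∃ a b, a < b ∧ S a = S b := by
    rcases lt_or_gt_of_ne hxy with hlt | hgt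
    · exact ⟨x, y, hlt, hSxy⟩
    · exact ⟨y, x, hgt, hSxy.symm⟩
  have hmod : (K₂ + a) % P = (K₂ + b) % P := by
    have := congrArg Prod.fst hSab
    simpa [hSdef, Fin.ext_iff] using this
  have hmin : ∀ i : Fin m, min (f (K₂ + a + i)) M = min (f (K₂ + b + i)) M := by
    intro i
    have := congrArg (fun p => (p.2 i : ℕ)) hSab
    simpa [hSdef] using this
  set T : ℕ := b - a with hTdef
  have hTpos : 0 < T := by omega
  have hPT : P ∣ T := by
    have : (K₂ + a) ≡ (K₂ + b) [MOD P] := hmod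
    have hd := (Nat.modEq_iff_dvd' (by omega)).mp this
    have : (K₂ + b) - (K₂ + a) = T := by omega
    rwa [this] at hd
  set A : ℕ := K₂ + a with hAdef
  have hAK₀ : K₀ ≤ A := by omega
  have hAK₁ : K₁ ≤ A := by omega
  have base : ∀ i : Fin m, f (A + i + T) = f (A + i) := by
    intro i
    have h1 : A + (i : ℕ) + T = K₂ + b + (i : ℕ) := by omega
    have h2 : f (A + (i : ℕ)) ≤ M := bound _ (by omega)
    have h3 : f (K₂ + b + (i : ℕ)) ≤ M := bound _ (by omega)
    have h4 := hmin i
    rw [h1]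
    omega
  have main : ∀ k, A ≤ k → f (k + T) = f k := by
    intro k
    induction k using Nat.strong_induction_on with
    | _ k IH =>
      intro hk
      rcases lt_or_ge k (A + m) with hlt | hge
      · -- base case
        have : k = A + (k - A) := by omega
        rw [this]
        exact base ⟨k - A, by omega⟩
      · -- inductive step
        have hkK₀ : K₀ ≤ k := by omega
        have hkTK₀ : K₀ ≤ k + T := by omega
        rw [hf k hkK₀, hf (k + T) hkTK₀]
        congr 1
        have e1 : (L.image fun i => f (k + T - i)) = L.image fun i => f (k - i) := by
          apply Finset.image_congr
          intro i hi
          have him : i ≤ m := hmL i hi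
          have hi1 : 1 ≤ i := Nat.one_le_iff_ne_zero.mpr (fun h0 => hL (h0 ▸ hi))
          show f (k + T - i) = f (k - i)
          have hsub : k + T - i = (k - i) + T := by omega
          rw [hsub]
          exact IH (k - i) (by omega) (by omega)
        have e2 : ((Finset.univ : Finset J).image fun j => g j (k + T))
            = Finset.univ.image fun j => g j k := by
          apply Finset.image_congr
          intro j _
          show g j (k + T) = g j k
          exact periodic_dvd (g j) P K₁ T (gper j) hPT k (by omega)
        have e3 : (L.image fun i => h (k + T - i)) = L.image fun i => h (k - i) := by
          apply Finset.image_congr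
          intro i hi
          have him : i ≤ m := hmL i hi
          show h (k + T - i) = h (k - i)
          have hsub : k + T - i = (k - i) + T := by omega
          rw [hsub]
          exact periodic_dvd h P K₁ T hper hPT (k - i) (by omega)
        rw [e1, e2, e3]
  exact ⟨T, hTpos, A, main⟩
end

section
/- Let T > 0 and let α₀,...,α_{T−1} be a permutation of {0,...,T−1}. Let F be a class of game positions such that the Grundy value of any G ∈ F equals α_{|G| mod T}, where |G| is the size of G. Let F' be a class of positions such that every move from a position G ∈ F' leads to a position in F, and such that the set of residues mod T of the numbers of vertices removable by legal moves from G is exactly {1,...,T−1}. Then the Grundy value of any G ∈ F' also equals α_{|G| mod T}. -/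
open SimpleGraph

/-- The graph induced on a set of vertices is connected. -/
def ConnOn {V : Type*} (G : SimpleGraph V) (s : Set V) : Prop := (G.induce s).Connected

/-- A legal move in the connected subtraction game CSG(L) on the graph `G`:
from remaining vertex set `s`, remove the (nonempty) connected set `s \ t` whose
cardinality lies in `L`, leaving `t`, which must be empty or induce a connected graph. -/
def CsgMove {V : Type*} [DecidableEq V] (G : SimpleGraph V) (L : Set ℕ)
    (s t : Finset V) : Prop :=
  t ⊆ s ∧ (s \ t).Nonempty ∧ (s \ t).card ∈ L ∧
    ConnOn G (↑(s \ t) : Set V) ∧ (t = ∅ ∨ ConnOn G (↑t : Set V))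

/-- The Grundy value of the position with remaining vertex set `s` in the game
CSG(L) played on `G`, defined by the mex recursion over all legal moves. -/
noncomputable def csgGrundy {V : Type*} [DecidableEq V] (G : SimpleGraph V) (L : Set ℕ)
    (s : Finset V) : ℕ :=
  mex (Set.range fun t : {t : Finset V // CsgMove G L s t} =>
    have : t.1.card < s.card := by
      obtain ⟨x, hx⟩ := t.2.2.1
      rw [Finset.mem_sdiff] at hx
      exact Finset.card_lt_card ((Finset.ssubset_iff_of_subset t.2.1).2 ⟨x, hx.1, hx.2⟩)
    csgGrundy G L t.1)
termination_by s.card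
decreasing_by exact this

/-- The subdivided star with `t` branches of lengths `l 0, …, l (t-1)` appended
to a central vertex `none`. -/
def subdividedStar {t : ℕ} (l : Fin t → ℕ) :
    SimpleGraph (Option (Σ i : Fin t, Fin (l i))) :=
  SimpleGraph.fromRel fun a b =>
    match a, b with
    | none, some ⟨_, j⟩ => (j : ℕ) = 0
    | some ⟨i, j⟩, some ⟨i', j'⟩ => (i : ℕ) = (i' : ℕ) ∧ (j : ℕ) + 1 = (j' : ℕ)
    | _, _ => False

/-- The graph `G` with a path on `k` new vertices appended at the vertex `u`. -/
def appendPath {V : Type*} (G : SimpleGraph V) (u : V) (k : ℕ) :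
    SimpleGraph (V ⊕ Fin k) :=
  SimpleGraph.fromRel fun a b =>
    match a, b with
    | Sum.inl x, Sum.inl y => G.Adj x y
    | Sum.inl x, Sum.inr j => x = u ∧ (j : ℕ) = 0
    | Sum.inr j, Sum.inr j' => (j : ℕ) + 1 = (j' : ℕ)
    | _, _ => False

/-- If the Grundy value of every position in `F` is `A (size mod T)` for a
permutation `A` of `{0,…,T-1}`, and every move from a position of `F'` leads to
`F`, with the residues mod `T` of the removable numbers of vertices being
exactly `{1,…,T-1}`, then positions of `F'` satisfy the same formula. -/
theorem stmt4 (α : Type) (moves : α → Set α) (size : α → ℕ)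
    (grundy : α → ℕ) (hgrundy : ∀ a, grundy a = mex (grundy '' moves a))
    (T : ℕ) (hT : 0 < T) (A : ℕ → ℕ)
    (hA : Set.BijOn A (Set.Iio T) (Set.Iio T))
    (F F' : Set α)
    (hF : ∀ a ∈ F, grundy a = A (size a % T))
    (hmoveF : ∀ a ∈ F', ∀ b ∈ moves a, b ∈ F)
    (hdec : ∀ a ∈ F', ∀ b ∈ moves a, size b < size a)
    (hres : ∀ a ∈ F',
      {r | ∃ b ∈ moves a, (size a - size b) % T = r} = Set.Icc 1 (T - 1)) :
    ∀ a ∈ F', grundy a = A (size a % T) := by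
  intro a ha
  set s := size a % T with hs
  have hsT : s < T := Nat.mod_lt _ hT
  have hAsT : A s < T := hA.mapsTo hsT
  have himg : grundy '' moves a = Set.Iio T \ {A s} := by
    ext y
    constructor
    · rintro ⟨b, hb, rfl⟩
      have hbF := hF b (hmoveF a ha b hb)
      have hrb : (size a - size b) % T ∈ Set.Icc 1 (T - 1) := by
        rw [← hres a ha]; exact ⟨b, hb, rfl⟩
      have hbT : size b % T < T := Nat.mod_lt _ hT
      have hsum : size b + (size a - size b) = size a :=
        Nat.add_sub_cancel' (le_of_lt (hdec a ha b hb))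
      have hne : size b % T ≠ s := by
        intro h
        have hmodeq : size b + (size a - size b) ≡ size b + 0 [MOD T] := by
          unfold Nat.ModEq
          rw [hsum, Nat.add_zero]
          exact h.symm
        have h0 : (size a - size b) % T = 0 := Nat.ModEq.add_left_cancel' _ hmodeq
        have := hrb.1
        omega
      rw [hbF]
      refine ⟨hA.mapsTo hbT, ?_⟩
      simp only [Set.mem_singleton_iff]
      intro hcon
      exact hne (hA.injOn hbT hsT hcon)
    · rintro ⟨hyT, hy⟩
      obtain ⟨r', hr'T, rfl⟩ := hA.surjOn hyT
      simp only [Set.mem_Iio] at hr'T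
      have hr's : r' ≠ s := by
        intro h; exact hy (by rw [h]; rfl)
      set r := (s + T - r') % T with hr
      have hrT : r < T := Nat.mod_lt _ hT
      have hr0 : r ≠ 0 := by
        intro h0
        have hdvd : T ∣ (s + T - r') := Nat.dvd_of_mod_eq_zero (by rw [← hr]; exact h0)
        obtain ⟨k, hk⟩ := hdvd
        match k with
        | 0 => omega
        | 1 => omega
        | (k + 2) =>
          have h2 : T * 2 ≤ T * (k + 2) := Nat.mul_le_mul_left T (by omega)
          omega
      have hrmem : r ∈ Set.Icc 1 (T - 1) := ⟨by omega, by omega⟩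
      rw [← hres a ha] at hrmem
      obtain ⟨b, hb, hbr⟩ := hrmem
      have hbF := hF b (hmoveF a ha b hb)
      have hbT : size b % T < T := Nat.mod_lt _ hT
      have hsum : size b + (size a - size b) = size a :=
        Nat.add_sub_cancel' (le_of_lt (hdec a ha b hb))
      -- (size b % T + r) % T = s
      have h1 : (size b % T + r) % T = s := by
        conv_lhs => rw [← hbr]
        rw [Nat.add_mod_mod, Nat.mod_add_mod, hsum]
      have h2 : (r' + r) % T = s := by
        rw [hr, Nat.add_mod_mod]
        have : r' + (s + T - r') = s + T := by omega
        rw [this, Nat.add_mod_right]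
        exact Nat.mod_eq_of_lt hsT
      have hmodeq : size b % T + r ≡ r' + r [MOD T] := by
        unfold Nat.ModEq
        rw [h1, h2]
      have h3 : size b % T ≡ r' [MOD T] := Nat.ModEq.add_right_cancel' _ hmodeq
      have h4 : size b % T = r' := by
        have := h3
        unfold Nat.ModEq at this
        rw [Nat.mod_eq_of_lt hbT, Nat.mod_eq_of_lt hr'T] at this
        exact this
      exact ⟨b, hb, by rw [hbF, h4]⟩
  rw [hgrundy, himg]
  unfold mex
  apply le_antisymm
  · exact Nat.sInf_le (by simp)
  · refine le_csInf ⟨A s, by simp⟩ ?_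
    intro n hn
    by_contra h
    push_neg at h
    exact hn ⟨lt_trans h hAsT, by simp; omega⟩
end

section
/- For the game CSG({1,...,N}) with N ≥ 1 on a connected graph G: if |V(G)| ∈ {0,1} then the Grundy value equals |V(G)|; if 2 ≤ |V(G)| ≤ N then the Grundy value is at least 2; if |V(G)| = N+1 then the Grundy value is 0; and if |V(G)| = N+2 then the Grundy value is 1. -/
open SimpleGraph

/-!
A position of CSG({1,…,N}) is a connected vertex set `s`. If `2 ≤ |s| ≤ N`, a player may take all
of `s` (Grundy value `0`) or all but a non-cut vertex (a single vertex, Grundy value `1`), so the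
Grundy value is at least `2`. If `|s| = N + 1`, every move leaves a connected set of size
between `1` and `N`, whose value is `1` or at least `2`, never `0`. If `|s| = N + 2`, removing a
non-cut vertex reaches a position of size `N + 1`, of value `0`, while every move leaves a
connected set of size between `2` and `N + 1`, whose value is at least `2` or `0`, never `1`.
-/

lemma mex_notMem {S : Set ℕ} {n : ℕ} (h : n ∉ S) : mex S ∉ S :=
  Nat.sInf_mem (s := {n | n ∉ S}) ⟨n, h⟩

variable {V : Type*}

section Connectivity

variable {G : SimpleGraph V}

def induceComplSingletonIso (G : SimpleGraph V) (s : Set V) (v : s) :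
    (G.induce s).induce {v}ᶜ ≃g G.induce (s \ {(v : V)}) where
  toFun x := ⟨x.1.1, x.1.2, fun h => x.2 (Subtype.ext h)⟩
  invFun x := ⟨⟨x.1, x.2.1⟩, fun h => x.2.2 (congrArg Subtype.val h)⟩
  left_inv _ := rfl
  right_inv _ := rfl
  map_rel_iff' := Iff.rfl

lemma connOn_singleton (v : V) : ConnOn G {v} := by
  rw [ConnOn, induce_singleton_eq_top]
  have : Nonempty ({v} : Set V) := ⟨⟨v, rfl⟩⟩
  exact connected_top

lemma connOn_univ (hG : G.Connected) : ConnOn G Set.univ :=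
  G.induceUnivIso.connected_iff.mpr hG

lemma ConnOn.exists_connOn_erase [DecidableEq V] {s : Finset V} (hs : ConnOn G ↑s)
    (hcard : 1 < s.card) : ∃ v ∈ s, ConnOn G ↑(s.erase v) := by
  have : Nontrivial (↑s : Set V) :=
    Set.nontrivial_coe_sort.mpr (Finset.one_lt_card_iff_nontrivial.mp hcard)
  obtain ⟨v, hv⟩ := Connected.exists_connected_induce_compl_singleton_of_finite_nontrivial hs
  refine ⟨v, v.2, ?_⟩
  rw [ConnOn, Finset.coe_erase]
  exact (induceComplSingletonIso G s v).connected_iff.mp hv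

end Connectivity

section Grundy

variable [DecidableEq V] {G : SimpleGraph V} {L : Set ℕ} {s t : Finset V}

lemma csgGrundy_eq_mex (G : SimpleGraph V) (L : Set ℕ) (s : Finset V) :
    csgGrundy G L s =
      mex (Set.range fun t : {t : Finset V // CsgMove G L s t} => csgGrundy G L t.1) := by
  rw [csgGrundy]

lemma CsgMove.ssubset (h : CsgMove G L s t) : t ⊂ s :=
  Finset.ssubset_iff_subset_ne.mpr
    ⟨h.1, by rintro rfl; exact Finset.not_nonempty_empty (Finset.sdiff_self t ▸ h.2.1)⟩

lemma CsgMove.connOn_of_nonempty (h : CsgMove G L s t) (ht : t.Nonempty) : ConnOn G ↑t :=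
  h.2.2.2.2.resolve_left ht.ne_empty

lemma csgGrundy_le_of_forall_csgMove_ne {n : ℕ}
    (h : ∀ t, CsgMove G L s t → csgGrundy G L t ≠ n) : csgGrundy G L s ≤ n := by
  rw [csgGrundy_eq_mex]
  exact Nat.sInf_le fun ⟨⟨t, ht⟩, htn⟩ => h t ht htn

lemma csgGrundy_le_card (G : SimpleGraph V) (L : Set ℕ) (s : Finset V) :
    csgGrundy G L s ≤ s.card := by
  induction s using Finset.strongInduction with
  | _ s ih =>
    refine csgGrundy_le_of_forall_csgMove_ne fun t ht => ?_
    have := ih t ht.ssubset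
    have := Finset.card_lt_card ht.ssubset
    omega

lemma CsgMove.csgGrundy_ne (h : CsgMove G L s t) : csgGrundy G L t ≠ csgGrundy G L s := by
  have hcard : s.card ∉ Set.range fun t : {t // CsgMove G L s t} => csgGrundy G L t.1 := by
    rintro ⟨⟨t', ht'⟩, heq⟩
    have := csgGrundy_le_card G L t'
    have := Finset.card_lt_card ht'.ssubset
    simp only at heq
    omega
  rw [csgGrundy_eq_mex G L s]
  exact fun heq => mex_notMem hcard (heq ▸ ⟨⟨t, h⟩, rfl⟩)

lemma csgGrundy_empty (G : SimpleGraph V) (L : Set ℕ) : csgGrundy G L ∅ = 0 :=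
  Nat.le_zero.mp <| csgGrundy_le_of_forall_csgMove_ne fun _ ht =>
    absurd ht.ssubset (Finset.not_ssubset_empty _)

lemma csgGrundy_singleton (G : SimpleGraph V) (L : Set ℕ) (hL : 1 ∈ L) (v : V) :
    csgGrundy G L {v} = 1 := by
  have hmove : CsgMove G L {v} ∅ :=
    ⟨Finset.empty_subset _, by simp, by simpa using hL, by simpa using connOn_singleton v,
      Or.inl rfl⟩
  have hle : csgGrundy G L {v} ≤ 1 := csgGrundy_le_of_forall_csgMove_ne fun t ht => by
    rw [Finset.ssubset_singleton_iff.mp ht.ssubset, csgGrundy_empty]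
    exact zero_ne_one
  have hne : csgGrundy G L {v} ≠ 0 := (csgGrundy_empty G L ▸ hmove.csgGrundy_ne).symm
  omega

end Grundy

section Interval

variable [DecidableEq V] {G : SimpleGraph V} {N : ℕ} {s t : Finset V}

lemma csgMove_Icc (hts : t ⊂ s) (hcard : (s \ t).card ≤ N) (hst : ConnOn G ↑(s \ t))
    (ht : t = ∅ ∨ ConnOn G ↑t) : CsgMove G (Set.Icc 1 N) s t := by
  have hne : (s \ t).Nonempty := Finset.sdiff_nonempty.mpr (not_subset_of_ssubset hts)
  exact ⟨hts.subset, hne, ⟨hne.card_pos, hcard⟩, hst, ht⟩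

lemma CsgMove.card_le_card_add (h : CsgMove G (Set.Icc 1 N) s t) : s.card ≤ t.card + N := by
  have := h.2.2.1.2
  rw [Finset.card_sdiff_of_subset h.1] at this
  omega

theorem two_le_csgGrundy (hs : ConnOn G ↑s) (h2 : 2 ≤ s.card) (hN : s.card ≤ N) :
    2 ≤ csgGrundy G (Set.Icc 1 N) s := by
  obtain ⟨v, hv, hvs⟩ := hs.exists_connOn_erase h2
  have take_all : CsgMove G (Set.Icc 1 N) s ∅ :=
    csgMove_Icc (Finset.empty_ssubset.mpr (Finset.card_pos.mp (by omega)))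
      (by simpa using hN) (by simpa using hs) (Or.inl rfl)
  have leave_one : CsgMove G (Set.Icc 1 N) s {v} := by
    refine csgMove_Icc ?_ ?_ ?_ (Or.inr (by simpa using connOn_singleton v))
    · exact Finset.ssubset_iff_subset_ne.mpr ⟨by simpa using hv, by rintro rfl; simp at h2⟩
    · rw [Finset.sdiff_singleton_eq_erase, Finset.card_erase_of_mem hv]; omega
    · rwa [Finset.sdiff_singleton_eq_erase]
  have h0 := take_all.csgGrundy_ne
  have h1 := leave_one.csgGrundy_ne
  rw [csgGrundy_empty] at h0
  rw [csgGrundy_singleton G _ (Set.mem_Icc.mpr ⟨le_rfl, by omega⟩)] at h1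
  omega

theorem csgGrundy_eq_zero_of_card_eq (h : s.card = N + 1) :
    csgGrundy G (Set.Icc 1 N) s = 0 := by
  refine Nat.le_zero.mp (csgGrundy_le_of_forall_csgMove_ne fun t ht => ?_)
  have hlt := Finset.card_lt_card ht.ssubset
  have hle := ht.card_le_card_add
  obtain hone | htwo : t.card = 1 ∨ 2 ≤ t.card := by omega
  · obtain ⟨w, rfl⟩ := Finset.card_eq_one.mp hone
    rw [csgGrundy_singleton G _ (Set.mem_Icc.mpr ⟨le_rfl, by omega⟩)]
    exact one_ne_zero
  · have : 2 ≤ csgGrundy G (Set.Icc 1 N) t :=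
      two_le_csgGrundy (ht.connOn_of_nonempty (Finset.card_pos.mp (by omega))) htwo (by omega)
    omega

theorem csgGrundy_eq_one_of_card_eq (hN : 1 ≤ N) (hs : ConnOn G ↑s) (h : s.card = N + 2) :
    csgGrundy G (Set.Icc 1 N) s = 1 := by
  have hle : csgGrundy G (Set.Icc 1 N) s ≤ 1 :=
    csgGrundy_le_of_forall_csgMove_ne fun t ht => by
      have hlt := Finset.card_lt_card ht.ssubset
      have hle := ht.card_le_card_add
      have hconn := ht.connOn_of_nonempty (Finset.card_pos.mp (by omega))
      obtain hsmall | hlarge : t.card ≤ N ∨ t.card = N + 1 := by omega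
      · have := two_le_csgGrundy hconn (by omega) hsmall
        omega
      · rw [csgGrundy_eq_zero_of_card_eq hlarge]
        exact zero_ne_one
  obtain ⟨v, hv, hvs⟩ := hs.exists_connOn_erase (by omega)
  have remove_one : CsgMove G (Set.Icc 1 N) s (s.erase v) := by
    refine csgMove_Icc (Finset.erase_ssubset hv) ?_ ?_ (Or.inr hvs) <;>
      rw [Finset.sdiff_erase_self hv]
    · simpa using hN
    · simpa using connOn_singleton v
  have hne := remove_one.csgGrundy_ne
  rw [csgGrundy_eq_zero_of_card_eq (by rw [Finset.card_erase_of_mem hv]; omega)] at hne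
  omega

end Interval

/-- Grundy values of CSG({1,…,N}) on a connected graph with few vertices. -/
theorem stmt5 (N : ℕ) (hN : 1 ≤ N) (V : Type) [Fintype V] [DecidableEq V]
    (G : SimpleGraph V) (hG : G.Preconnected) :
    (Fintype.card V ≤ 1 →
      csgGrundy G (Set.Icc 1 N) Finset.univ = Fintype.card V) ∧
    (2 ≤ Fintype.card V → Fintype.card V ≤ N →
      2 ≤ csgGrundy G (Set.Icc 1 N) Finset.univ) ∧
    (Fintype.card V = N + 1 → csgGrundy G (Set.Icc 1 N) Finset.univ = 0) ∧
    (Fintype.card V = N + 2 → csgGrundy G (Set.Icc 1 N) Finset.univ = 1) := by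
  have hconn (h : 0 < Fintype.card V) : ConnOn G ↑(Finset.univ : Finset V) := by
    have := Fintype.card_pos_iff.mp h
    simpa using connOn_univ ⟨hG⟩
  refine ⟨fun h => ?_, fun h2 hle => ?_, csgGrundy_eq_zero_of_card_eq, fun h => ?_⟩
  · obtain h0 | h1 := Nat.le_one_iff_eq_zero_or_eq_one.mp h
    · rw [Finset.univ_eq_empty_iff.mpr (Fintype.card_eq_zero_iff.mp h0), csgGrundy_empty, h0]
    · obtain ⟨v, hv⟩ := Finset.card_eq_one.mp h1
      rw [hv, csgGrundy_singleton G _ (Set.mem_Icc.mpr ⟨le_rfl, hN⟩), h1]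
  · exact two_le_csgGrundy (hconn (by omega)) h2 hle
  · exact csgGrundy_eq_one_of_card_eq hN (hconn (by omega)) h
end

section
/- For the game CSG({1,...,N}) with N ≥ 1: let G be a connected graph, u a vertex of G, and G' the graph obtained from G by appending a path of N+1 new vertices to u. Then: if |V(G)| ∈ {0,1} the Grundy value of G' equals |V(G)|; if 2 ≤ |V(G)| ≤ N the Grundy value of G' is at least 2; if |V(G)| = N+1 the Grundy value of G' is 0; and if |V(G)| = N+2 the Grundy value of G' is 1. -/
open SimpleGraph

set_option linter.unusedSectionVars false
set_option linter.unusedVariables false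

section Mex

lemma mex_eq_zero_of {s : Set ℕ} (h : 0 ∉ s) : mex s = 0 :=
  Nat.sInf_eq_zero.2 (Or.inl h)

lemma mex_notMem_s7 {s : Set ℕ} (hf : s.Finite) : mex s ∉ s := by
  have hne : {n | n ∉ s}.Nonempty := hf.infinite_compl.nonempty
  exact Nat.sInf_mem hne

lemma mex_eq_one {s : Set ℕ} (h0 : 0 ∈ s) (h1 : 1 ∉ s) : mex s = 1 := by
  apply le_antisymm (Nat.sInf_le h1)
  rcases Nat.eq_zero_or_pos (mex s) with h | h
  · exfalso
    rcases Nat.sInf_eq_zero.1 h with h' | h'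
    · exact h' h0
    · rw [Set.eq_empty_iff_forall_notMem] at h'; exact h' 1 h1
  · exact h

lemma mex_ge_two {s : Set ℕ} (hf : s.Finite) (h0 : 0 ∈ s) (h1 : 1 ∈ s) : 2 ≤ mex s := by
  have hm := mex_notMem_s7 hf
  by_contra h
  push_neg at h
  have : mex s = 0 ∨ mex s = 1 := by omega
  rcases this with h' | h' <;> rw [h'] at hm
  · exact hm h0
  · exact hm h1

end Mex

section GrundyInterface

variable {W : Type*} [DecidableEq W] (H : SimpleGraph W) (L : Set ℕ)

lemma grundy_def (s : Finset W) :
    csgGrundy H L s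
      = mex (Set.range fun t : {t : Finset W // CsgMove H L s t} => csgGrundy H L t.1) := by
  rw [csgGrundy]

variable [Fintype W]

lemma grundy_ne {s t : Finset W} (h : CsgMove H L s t) :
    csgGrundy H L t ≠ csgGrundy H L s := by
  intro he
  have hmem : csgGrundy H L t
      ∈ Set.range fun t : {t : Finset W // CsgMove H L s t} => csgGrundy H L t.1 := ⟨⟨t, h⟩, rfl⟩
  have hnm := mex_notMem_s7 (Set.finite_range fun t : {t : Finset W // CsgMove H L s t} => csgGrundy H L t.1)
  rw [← grundy_def, ← he] at hnm
  exact hnm hmem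

lemma grundy_eq_zero {s : Finset W} (h : ∀ t, CsgMove H L s t → csgGrundy H L t ≠ 0) :
    csgGrundy H L s = 0 := by
  rw [grundy_def]
  apply mex_eq_zero_of
  rintro ⟨⟨t, ht⟩, hval⟩
  exact h t ht hval

lemma grundy_eq_one {s : Finset W} (h0 : ∃ t, CsgMove H L s t ∧ csgGrundy H L t = 0)
    (h1 : ∀ t, CsgMove H L s t → csgGrundy H L t ≠ 1) : csgGrundy H L s = 1 := by
  rw [grundy_def]
  apply mex_eq_one
  · obtain ⟨t, ht, hv⟩ := h0; exact ⟨⟨t, ht⟩, hv⟩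
  · rintro ⟨⟨t, ht⟩, hval⟩
    exact h1 t ht hval

lemma grundy_ge_two' {s : Finset W} (h0 : ∃ t, CsgMove H L s t ∧ csgGrundy H L t = 0)
    (h1 : ∃ t, CsgMove H L s t ∧ csgGrundy H L t = 1) : 2 ≤ csgGrundy H L s := by
  rw [grundy_def]
  apply mex_ge_two (Set.finite_range _)
  · obtain ⟨t, ht, hv⟩ := h0; exact ⟨⟨t, ht⟩, hv⟩
  · obtain ⟨t, ht, hv⟩ := h1; exact ⟨⟨t, ht⟩, hv⟩

end GrundyInterface
section Transfer

variable {W1 W2 : Type*}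

lemma reachTransfer {H1 : SimpleGraph W1} {H2 : SimpleGraph W2} {s1 : Set W1} {s2 : Set W2}
    {f : W1 → W2} (hmap : ∀ x ∈ s1, f x ∈ s2)
    (hadj : ∀ x y, x ∈ s1 → y ∈ s1 → H1.Adj x y → H2.Adj (f x) (f y))
    {x y : W1} (hx : x ∈ s1) (hy : y ∈ s1)
    (h : (H1.induce s1).Reachable ⟨x, hx⟩ ⟨y, hy⟩) :
    (H2.induce s2).Reachable ⟨f x, hmap x hx⟩ ⟨f y, hmap y hy⟩ := by
  let F : H1.induce s1 →g H2.induce s2 :=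
    { toFun := fun p => ⟨f p.1, hmap p.1 p.2⟩
      map_rel' := by
        intro p q hpq
        exact hadj p.1 q.1 p.2 q.2 hpq }
  exact h.map F

lemma connTransfer {H1 : SimpleGraph W1} {H2 : SimpleGraph W2} {s1 : Set W1} {s2 : Set W2}
    {f : W1 → W2} (hmap : ∀ x ∈ s1, f x ∈ s2)
    (hadj : ∀ x y, x ∈ s1 → y ∈ s1 → H1.Adj x y → H2.Adj (f x) (f y))
    (hsurj : ∀ y ∈ s2, ∃ x ∈ s1, f x = y)
    (h : (H1.induce s1).Connected) : (H2.induce s2).Connected := by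
  rw [connected_iff] at h ⊢
  obtain ⟨hpre, hne⟩ := h
  constructor
  · rintro ⟨a, ha⟩ ⟨b, hb⟩
    obtain ⟨x, hx, rfl⟩ := hsurj a ha
    obtain ⟨y, hy, rfl⟩ := hsurj b hb
    exact reachTransfer hmap hadj hx hy (hpre ⟨x, hx⟩ ⟨y, hy⟩)
  · obtain ⟨⟨x, hx⟩⟩ := hne
    exact ⟨⟨f x, hmap x hx⟩⟩

lemma exists_crossing {H : SimpleGraph W1} {t X : Set W1} :
    ∀ {a b : t} (_ : (H.induce t).Walk a b), (a : W1) ∈ X → (b : W1) ∉ X →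
      ∃ c d : W1, c ∈ t ∧ c ∈ X ∧ d ∈ t ∧ d ∉ X ∧ H.Adj c d := by
  intro a b p
  induction p with
  | nil => intro ha hb; exact absurd ha hb
  | @cons x z y h q ih =>
    intro ha hb
    by_cases hz : (z : W1) ∈ X
    · exact ih hz hb
    · exact ⟨x.1, z.1, x.2, ha, z.2, hz, h⟩

lemma sep_reach {H : SimpleGraph W1} {t : Set W1} {X : Set W1} {c : W1} (hc : c ∈ X)
    (hedge : ∀ a b, a ∈ X → b ∈ t → b ∉ X → H.Adj a b → a = c) :
    ∀ {a b : t} (_ : (H.induce t).Walk a b) (hb : (b : W1) ∈ X),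
      (∀ ha : (a : W1) ∈ X, (H.induce X).Reachable ⟨a, ha⟩ ⟨b, hb⟩) ∧
      ((a : W1) ∉ X → (H.induce X).Reachable ⟨c, hc⟩ ⟨b, hb⟩) := by
  intro a b p
  induction p with
  | nil =>
    intro hb
    exact ⟨fun ha => Reachable.refl _, fun ha => absurd hb ha⟩
  | @cons x z y h q ih =>
    intro hb
    by_cases hz : (z : W1) ∈ X
    · obtain ⟨ih1, _⟩ := ih hb
      constructor
      · intro ha
        have hadj : (H.induce X).Adj ⟨x, ha⟩ ⟨z, hz⟩ := h
        exact hadj.reachable.trans (ih1 hz)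
      · intro ha
        have hzc : (z : W1) = c := hedge z x hz x.2 ha h.symm
        exact (Subtype.ext hzc : (⟨(z : W1), hz⟩ : X) = ⟨c, hc⟩) ▸ ih1 hz
    · constructor
      · intro ha
        have hxc : (x : W1) = c := hedge x z ha z.2 hz h
        exact (Subtype.ext hxc : (⟨(x : W1), ha⟩ : X) = ⟨c, hc⟩) ▸ (ih hb).2 hz
      · intro _
        exact (ih hb).2 hz

lemma sep_conn {H : SimpleGraph W1} {t X : Set W1} {c : W1} (hX : X ⊆ t) (hc : c ∈ X)
    (hedge : ∀ a b, a ∈ X → b ∈ t → b ∉ X → H.Adj a b → a = c)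
    (h : (H.induce t).Connected) : (H.induce X).Connected := by
  rw [connected_iff]
  constructor
  · rintro ⟨x, hx⟩ ⟨y, hy⟩
    obtain ⟨p⟩ := h.preconnected ⟨x, hX hx⟩ ⟨y, hX hy⟩
    exact (sep_reach hc hedge p hy).1 hx
  · exact ⟨⟨c, hc⟩⟩

end Transfer

section Noncut

lemma exists_noncut {W' : Type*} [Fintype W'] {H : SimpleGraph W'} (hconn : H.Connected)
    (r : W') (hcard : 2 ≤ Fintype.card W') :
    ∃ v, v ≠ r ∧ (H.induce ({v}ᶜ : Set W')).Connected := by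
  obtain ⟨v, -, hv⟩ := Finset.exists_max_image Finset.univ (H.dist r) ⟨r, Finset.mem_univ r⟩
  have hvmax : ∀ x, H.dist r x ≤ H.dist r v := fun x => hv x (Finset.mem_univ x)
  have hvr : v ≠ r := by
    intro he
    subst he
    obtain ⟨a, b, hab⟩ := Fintype.exists_pair_of_one_lt_card hcard
    have ha : a = v := by
      have := hvmax a
      rw [SimpleGraph.dist_self] at this
      exact (hconn.dist_eq_zero_iff.1 (Nat.le_zero.1 this)).symm
    have hb : b = v := by
      have := hvmax b
      rw [SimpleGraph.dist_self] at this
      exact (hconn.dist_eq_zero_iff.1 (Nat.le_zero.1 this)).symm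
    exact hab (ha.trans hb.symm)
  have hr : r ∈ ({v}ᶜ : Set W') := by simp [Ne.symm hvr]
  refine ⟨v, hvr, ?_⟩
  rw [connected_iff]
  refine ⟨?_, ⟨⟨r, hr⟩⟩⟩
  have hs : ∀ n (x : W') (_ : H.dist r x = n) (hx : x ∈ ({v}ᶜ : Set W')),
      (H.induce ({v}ᶜ : Set W')).Reachable ⟨x, hx⟩ ⟨r, hr⟩ := by
    intro n
    induction n using Nat.strong_induction_on with
    | _ n ih =>
      intro x hdx hx
      rcases eq_or_ne x r with rfl | hxr
      · exact Reachable.refl _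
      · have hd0 : H.dist r x ≠ 0 := by
          intro h0
          exact hxr (hconn.dist_eq_zero_iff.1 h0).symm
        obtain ⟨p, hp⟩ := (hconn.preconnected r x).exists_walk_length_eq_dist
        cases hq : p.reverse with
        | nil =>
          exfalso
          have : p.length = 0 := by
            have := congrArg SimpleGraph.Walk.length hq
            rwa [SimpleGraph.Walk.length_reverse] at this
          exact hd0 (by omega)
        | @cons _ z _ hadj q' =>
          have hlen : q'.length + 1 = H.dist r x := by
            have := congrArg SimpleGraph.Walk.length hq
            rw [SimpleGraph.Walk.length_reverse, SimpleGraph.Walk.length_cons] at this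
            omega
          have hdz : H.dist r z < H.dist r x := by
            have h1 : H.dist r z ≤ q'.length := by
              rw [SimpleGraph.dist_comm]
              exact SimpleGraph.dist_le q'
            omega
          have hzv : z ∈ ({v}ᶜ : Set W') := by
            simp only [Set.mem_compl_iff, Set.mem_singleton_iff]
            intro he
            subst he
            exact absurd (hvmax x) (by omega)
          have hreach := ih (H.dist r z) (by omega) z rfl hzv
          have hadj' : (H.induce ({v}ᶜ : Set W')).Adj ⟨x, hx⟩ ⟨z, hzv⟩ := hadj
          exact hadj'.reachable.trans hreach
  intro a b
  exact (hs _ a.1 rfl a.2).trans (hs _ b.1 rfl b.2).symm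

lemma exists_noncut' {W : Type*} [Fintype W] [DecidableEq W] {H : SimpleGraph W} {s : Finset W}
    (hconn : ConnOn H ↑s) (hcard : 2 ≤ s.card) {r : W} (hr : r ∈ s) :
    ∃ v ∈ s, v ≠ r ∧ ConnOn H ↑(s.erase v) := by
  have hcard' : 2 ≤ Fintype.card (↑s : Set W) := by
    rwa [← Set.toFinset_card, Finset.toFinset_coe]
  obtain ⟨v, hvr, hvconn⟩ := exists_noncut (hconn) (⟨r, by exact_mod_cast hr⟩ : (↑s : Set W)) hcard'
  refine ⟨v.1, by exact_mod_cast v.2, fun he => hvr (Subtype.ext he), ?_⟩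
  apply connTransfer (f := (Subtype.val : (↑s : Set W) → W)) ?_ ?_ ?_ hvconn
  · intro x hx
    have hxv : x ≠ v := hx
    simp only [Finset.coe_erase, Set.mem_diff, Set.mem_singleton_iff]
    exact ⟨by exact_mod_cast x.2, fun he => hxv (Subtype.ext he)⟩
  · intro x y _ _ h
    exact h
  · intro y hy
    simp only [Finset.coe_erase, Set.mem_diff, Set.mem_singleton_iff] at hy
    exact ⟨⟨y, by exact_mod_cast hy.1⟩, fun he => hy.2 (congrArg Subtype.val he), rfl⟩

end Noncut
section SizeLemmas

variable {W : Type*} [Fintype W] [DecidableEq W] (H : SimpleGraph W) {N : ℕ}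

lemma connOn_singleton_s7 (x : W) : ConnOn H ({x} : Set W) := by
  rw [ConnOn, connected_iff]
  refine ⟨?_, ⟨⟨x, rfl⟩⟩⟩
  rintro ⟨a, ha⟩ ⟨b, hb⟩
  rw [Set.mem_singleton_iff] at ha hb
  subst ha; subst hb
  exact Reachable.refl _

lemma connOn_fin_singleton (x : W) : ConnOn H (↑({x} : Finset W)) := by
  simpa using connOn_singleton_s7 H x

lemma grundy_empty : csgGrundy H (Set.Icc 1 N) (∅ : Finset W) = 0 := by
  apply grundy_eq_zero
  intro t ht
  exfalso
  obtain ⟨x, hx⟩ := ht.2.1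
  simp at hx

lemma move_all (s : Finset W) (hconn : ConnOn H ↑s) (h1 : 1 ≤ s.card) (h2 : s.card ≤ N) :
    CsgMove H (Set.Icc 1 N) s ∅ := by
  refine ⟨Finset.empty_subset s, ?_, ?_, ?_, Or.inl rfl⟩ <;> rw [Finset.sdiff_empty]
  · exact Finset.card_pos.1 h1
  · exact Set.mem_Icc.2 ⟨h1, h2⟩
  · exact hconn

lemma grundy_card_one (hN : 1 ≤ N) (s : Finset W) (hcard : s.card = 1) :
    csgGrundy H (Set.Icc 1 N) s = 1 := by
  have hconn : ConnOn H ↑s := by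
    obtain ⟨x, rfl⟩ := Finset.card_eq_one.1 hcard
    exact connOn_fin_singleton H x
  apply grundy_eq_one
  · exact ⟨∅, move_all H s hconn (by omega) (by omega), grundy_empty H⟩
  · intro t ht
    have ht0 : t = ∅ := by
      by_contra hne
      obtain ⟨y, hy⟩ := ht.2.1
      rw [Finset.mem_sdiff] at hy
      obtain ⟨z, hz⟩ := Finset.nonempty_iff_ne_empty.2 hne
      have h1 := Finset.card_le_card ht.1
      have : ({y, z} : Finset W) ⊆ s := by
        intro w hw
        rcases Finset.mem_insert.1 hw with rfl | hw
        · exact hy.1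
        · rw [Finset.mem_singleton] at hw; subst hw; exact ht.1 hz
      have hyz : y ≠ z := fun he => hy.2 (he ▸ hz)
      have := Finset.card_le_card this
      rw [Finset.card_insert_of_notMem (by simpa using hyz), Finset.card_singleton] at this
      omega
    rw [ht0, grundy_empty]
    omega

lemma grundy_card_between (hN : 1 ≤ N) (s : Finset W) (hconn : ConnOn H ↑s)
    (h2 : 2 ≤ s.card) (hsN : s.card ≤ N) :
    2 ≤ csgGrundy H (Set.Icc 1 N) s := by
  obtain ⟨r, hr⟩ := Finset.card_pos.1 (show 0 < s.card by omega)
  obtain ⟨v, hv, hvr, hvconn⟩ := exists_noncut' hconn h2 hr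
  apply grundy_ge_two'
  · exact ⟨∅, move_all H s hconn (by omega) hsN, grundy_empty H⟩
  · refine ⟨{v}, ?_, grundy_card_one H hN {v} (Finset.card_singleton v)⟩
    have hes : s \ {v} = s.erase v := (Finset.erase_eq s v).symm
    refine ⟨Finset.singleton_subset_iff.2 hv, ?_, ?_, ?_, Or.inr (connOn_fin_singleton H v)⟩
    · rw [hes]
      have := Finset.card_erase_of_mem hv
      exact Finset.card_pos.1 (by omega)
    · rw [hes, Set.mem_Icc, Finset.card_erase_of_mem hv]
      omega
    · rw [hes]; exact hvconn

lemma grundy_card_N1 (s : Finset W) (hconn : ConnOn H ↑s) (hcard : s.card = N + 1) :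
    csgGrundy H (Set.Icc 1 N) s = 0 := by
  apply grundy_eq_zero
  intro t ht
  have hkmem := ht.2.2.1
  rw [Set.mem_Icc] at hkmem
  have hcs : (s \ t).card = s.card - t.card := Finset.card_sdiff_of_subset ht.1
  have hle := Finset.card_le_card ht.1
  have htcard : 1 ≤ t.card ∧ t.card ≤ N := by omega
  have htconn : ConnOn H ↑t := by
    rcases ht.2.2.2.2 with h | h
    · exfalso; rw [h, Finset.card_empty] at htcard; omega
    · exact h
  have hne := grundy_ne H (Set.Icc 1 N) (move_all H t htconn htcard.1 htcard.2)
  rw [grundy_empty] at hne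
  exact fun h0 => hne h0.symm

lemma grundy_card_N2 (hN : 1 ≤ N) (s : Finset W) (hconn : ConnOn H ↑s)
    (hcard : s.card = N + 2) :
    csgGrundy H (Set.Icc 1 N) s = 1 := by
  apply grundy_eq_one
  · obtain ⟨r, hr⟩ := Finset.card_pos.1 (show 0 < s.card by omega)
    obtain ⟨v, hv, hvr, hvconn⟩ := exists_noncut' hconn (by omega) hr
    have he : s \ s.erase v = {v} := by
      ext w
      simp only [Finset.mem_sdiff, Finset.mem_erase, Finset.mem_singleton]
      constructor
      · rintro ⟨hw, h2⟩
        by_contra hne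
        exact h2 ⟨hne, hw⟩
      · rintro rfl
        exact ⟨hv, fun h => h.1 rfl⟩
    refine ⟨s.erase v, ⟨Finset.erase_subset v s, ?_, ?_, ?_, Or.inr hvconn⟩, ?_⟩
    · rw [he]; exact ⟨v, Finset.mem_singleton_self v⟩
    · rw [he, Finset.card_singleton, Set.mem_Icc]; omega
    · rw [he]; exact connOn_fin_singleton H v
    · exact grundy_card_N1 H (s.erase v) hvconn (by rw [Finset.card_erase_of_mem hv, hcard]; omega)
  · intro t ht
    rcases ht.2.2.2.2 with h0 | htconn
    · rw [h0, grundy_empty]; omega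
    · have hkmem := ht.2.2.1
      rw [Set.mem_Icc] at hkmem
      have hcs : (s \ t).card = s.card - t.card := Finset.card_sdiff_of_subset ht.1
      have hle := Finset.card_le_card ht.1
      rcases eq_or_ne t.card (N + 1) with hc | hc
      · rw [grundy_card_N1 H t htconn hc]; omega
      · have := grundy_card_between H hN t htconn (by omega) (by omega)
        omega

end SizeLemmas
section AppendDefs

variable {V : Type} [Fintype V] [DecidableEq V]

/-- The graph-side vertices. -/
def gside (N : ℕ) (B : Finset V) : Finset (V ⊕ Fin (N+1)) := B.image Sum.inl

/-- The first `i` path vertices. -/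
def pre (N i : ℕ) : Finset (V ⊕ Fin (N+1)) :=
  (Finset.univ.filter (fun j : Fin (N+1) => (j : ℕ) < i)).image Sum.inr

/-- The path vertices from index `i` on. -/
def suf (N i : ℕ) : Finset (V ⊕ Fin (N+1)) :=
  (Finset.univ.filter (fun j : Fin (N+1) => i ≤ (j : ℕ))).image Sum.inr

variable {N i : ℕ} {B : Finset V}

@[simp] lemma inl_mem_gside {x : V} : Sum.inl x ∈ gside N B ↔ x ∈ B := by
  simp [gside]

@[simp] lemma inr_notMem_gside {j : Fin (N+1)} : (Sum.inr j : V ⊕ Fin (N+1)) ∉ gside N B := by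
  simp [gside]

@[simp] lemma inr_mem_pre {j : Fin (N+1)} : (Sum.inr j : V ⊕ Fin (N+1)) ∈ pre N i ↔ (j : ℕ) < i := by
  simp [pre]

@[simp] lemma inl_notMem_pre {x : V} : (Sum.inl x : V ⊕ Fin (N+1)) ∉ pre N i := by
  simp [pre]

@[simp] lemma inr_mem_suf {j : Fin (N+1)} : (Sum.inr j : V ⊕ Fin (N+1)) ∈ suf N i ↔ i ≤ (j : ℕ) := by
  simp [suf]

@[simp] lemma inl_notMem_suf {x : V} : (Sum.inl x : V ⊕ Fin (N+1)) ∉ suf N i := by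
  simp [suf]

lemma card_gside : (gside N B).card = B.card :=
  Finset.card_image_of_injective _ Sum.inl_injective

lemma card_pre (h : i ≤ N + 1) : (pre N i : Finset (V ⊕ Fin (N+1))).card = i := by
  rw [pre, Finset.card_image_of_injective _ Sum.inr_injective]
  have : (Finset.univ.filter (fun j : Fin (N+1) => (j : ℕ) < i))
      = Finset.image (Fin.castLE h) Finset.univ := by
    ext j
    simp only [Finset.mem_filter, Finset.mem_univ, true_and, Finset.mem_image]
    constructor
    · intro hj
      exact ⟨⟨(j : ℕ), hj⟩, by ext; simp [Fin.castLE]⟩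
    · rintro ⟨k, rfl⟩
      exact k.2
  rw [this, Finset.card_image_of_injective _ (Fin.castLE_injective h),
    Finset.card_univ, Fintype.card_fin]

lemma card_suf (h : i ≤ N + 1) : (suf N i : Finset (V ⊕ Fin (N+1))).card = N + 1 - i := by
  rw [suf, Finset.card_image_of_injective _ Sum.inr_injective]
  have : (Finset.univ.filter (fun j : Fin (N+1) => i ≤ (j : ℕ)))
      = Finset.image (fun k : Fin (N+1-i) => (⟨i + (k : ℕ), by omega⟩ : Fin (N+1))) Finset.univ := by
    ext j
    simp only [Finset.mem_filter, Finset.mem_univ, true_and, Finset.mem_image]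
    constructor
    · intro hj
      have hj2 := j.2
      exact ⟨⟨(j : ℕ) - i, by omega⟩, by ext; simp; omega⟩
    · rintro ⟨k, rfl⟩
      simp
  rw [this, Finset.card_image_of_injective _
      (fun a b hab => by ext; have := congrArg Fin.val hab; simpa using this),
    Finset.card_univ, Fintype.card_fin]

lemma pre_union_suf (h : i ≤ N + 1) : pre N i ∪ suf N i = (pre N (N+1) : Finset (V ⊕ Fin (N+1))) := by
  ext w
  rcases w with x | j
  · simp
  · simp only [Finset.mem_union, inr_mem_pre, inr_mem_suf]
    have := j.2
    omega

lemma pre_sdiff_suf (h : i ≤ N + 1) :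
    (pre N (N+1) : Finset (V ⊕ Fin (N+1))) \ suf N i = pre N i := by
  ext w
  rcases w with x | j
  · simp
  · simp only [Finset.mem_sdiff, inr_mem_pre, inr_mem_suf]
    have := j.2
    omega

lemma gside_disj_path {s : Finset (Fin (N+1))} {f : Fin (N+1) → V ⊕ Fin (N+1)} :
    True := trivial

lemma univ_eq_gside_pre :
    (Finset.univ : Finset (V ⊕ Fin (N+1))) = gside N Finset.univ ∪ pre N (N+1) := by
  ext w
  rcases w with x | j
  · simp
  · simp [j.2]

lemma disj_gside_pre : Disjoint (gside N B) (pre N i) := by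
  rw [Finset.disjoint_left]
  intro w hw hw2
  rcases w with x | j
  · exact inl_notMem_pre hw2
  · exact inr_notMem_gside hw

lemma disj_gside_suf : Disjoint (gside N B) (suf N i) := by
  rw [Finset.disjoint_left]
  intro w hw hw2
  rcases w with x | j
  · exact inl_notMem_suf hw2
  · exact inr_notMem_gside hw

end AppendDefs
section AppendAdj

variable {V : Type} [Fintype V] [DecidableEq V] {N : ℕ} {G : SimpleGraph V} {u : V}

lemma adj_inl_inl {x y : V} :
    (appendPath G u (N+1)).Adj (Sum.inl x) (Sum.inl y) ↔ G.Adj x y := by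
  rw [appendPath, fromRel_adj]
  constructor
  · rintro ⟨-, h | h⟩
    · exact h
    · exact h.symm
  · intro h
    exact ⟨by simp [h.ne], Or.inl h⟩

lemma adj_inl_inr {x : V} {j : Fin (N+1)} :
    (appendPath G u (N+1)).Adj (Sum.inl x) (Sum.inr j) ↔ x = u ∧ (j : ℕ) = 0 := by
  rw [appendPath, fromRel_adj]
  constructor
  · rintro ⟨-, h | h⟩
    · exact h
    · exact h.elim
  · intro h
    exact ⟨by simp, Or.inl h⟩

lemma adj_inr_inl {x : V} {j : Fin (N+1)} :
    (appendPath G u (N+1)).Adj (Sum.inr j) (Sum.inl x) ↔ x = u ∧ (j : ℕ) = 0 := by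
  rw [adj_comm]
  exact adj_inl_inr

lemma adj_inr_inr {j j' : Fin (N+1)} :
    (appendPath G u (N+1)).Adj (Sum.inr j) (Sum.inr j')
      ↔ ((j:ℕ)+1 = (j':ℕ) ∨ (j':ℕ)+1 = (j:ℕ)) := by
  rw [appendPath, fromRel_adj]
  constructor
  · rintro ⟨-, h | h⟩
    · exact Or.inl h
    · exact Or.inr h
  · intro h
    refine ⟨?_, h⟩
    rcases h with h | h <;> simp only [ne_eq, Sum.inr.injEq] <;> intro he <;>
      rw [he] at h <;> omega

lemma interval_conn {R : Finset (V ⊕ Fin (N+1))} {b : Fin (N+1)} (hb : Sum.inr b ∈ R)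
    (hsub : ∀ w ∈ R, ∃ j : Fin (N+1), w = Sum.inr j ∧ (b:ℕ) ≤ (j:ℕ))
    (hfill : ∀ j : Fin (N+1), Sum.inr j ∈ R → ∀ j' : Fin (N+1),
      (b:ℕ) ≤ (j':ℕ) → (j':ℕ) ≤ (j:ℕ) → Sum.inr j' ∈ R) :
    ConnOn (appendPath G u (N+1)) (↑R) := by
  rw [ConnOn, connected_iff]
  refine ⟨?_, ⟨⟨_, by exact_mod_cast hb⟩⟩⟩
  have key : ∀ (n : ℕ) (j : Fin (N+1)) (hj : Sum.inr j ∈ R), (j:ℕ) = (b:ℕ) + n →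
      ((appendPath G u (N+1)).induce ↑R).Reachable ⟨Sum.inr j, by exact_mod_cast hj⟩
        ⟨Sum.inr b, by exact_mod_cast hb⟩ := by
    intro n
    induction n with
    | zero =>
      intro j hj hjb
      have hjb' : j = b := Fin.ext (by omega)
      subst hjb'
      exact Reachable.refl _
    | succ m ih =>
      intro j hj hjb
      have hj2 := j.2
      have hlt : (b:ℕ) + m < N + 1 := by omega
      have hj'mem : Sum.inr (⟨(b:ℕ) + m, hlt⟩ : Fin (N+1)) ∈ R :=
        hfill j hj _ (by simp) (by simp; omega)
      have hadj : ((appendPath G u (N+1)).induce ↑R).Adj ⟨Sum.inr j, by exact_mod_cast hj⟩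
          ⟨Sum.inr ⟨(b:ℕ) + m, hlt⟩, by exact_mod_cast hj'mem⟩ := by
        show (appendPath G u (N+1)).Adj (Sum.inr j) (Sum.inr ⟨(b:ℕ) + m, hlt⟩)
        rw [adj_inr_inr]
        right; simp; omega
      exact hadj.reachable.trans (ih _ hj'mem (by simp))
  rintro ⟨w, hw⟩ ⟨w2, hw2⟩
  obtain ⟨j, rfl, hbj⟩ := hsub w (by exact_mod_cast hw)
  obtain ⟨j2, rfl, hbj2⟩ := hsub w2 (by exact_mod_cast hw2)
  exact (key ((j:ℕ) - b) j (by exact_mod_cast hw) (by omega)).trans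
    (key ((j2:ℕ) - b) j2 (by exact_mod_cast hw2) (by omega)).symm

lemma suf_conn {i : ℕ} (h1 : i ≤ N) :
    ConnOn (appendPath G u (N+1)) (↑(suf N i : Finset (V ⊕ Fin (N+1)))) := by
  apply interval_conn (b := (⟨i, by omega⟩ : Fin (N+1)))
  · simp
  · intro w hw
    rcases w with x | j
    · exact absurd hw inl_notMem_suf
    · exact ⟨j, rfl, by simpa using hw⟩
  · intro j hj j' h1' h2'
    simp only [inr_mem_suf] at hj ⊢
    simp at h1'
    omega

lemma pre_conn {m : ℕ} (h1 : 1 ≤ m) :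
    ConnOn (appendPath G u (N+1)) (↑(pre N m : Finset (V ⊕ Fin (N+1)))) := by
  apply interval_conn (b := (⟨0, by omega⟩ : Fin (N+1)))
  · simp only [inr_mem_pre]; omega
  · intro w hw
    rcases w with x | j
    · exact absurd hw inl_notMem_pre
    · exact ⟨j, rfl, by simp⟩
  · intro j hj j' _ h2'
    simp only [inr_mem_pre] at hj ⊢
    omega

lemma glue_conn {B : Finset V} (hB : ConnOn (appendPath G u (N+1)) (↑(gside N B))) (hu : u ∈ B)
    {m : ℕ} (h1 : 1 ≤ m) :
    ConnOn (appendPath G u (N+1)) (↑(gside N B ∪ pre N m)) := by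
  have hB' : ((appendPath G u (N+1)).induce ↑(gside N B)).Connected := hB
  rw [ConnOn, connected_iff]
  have humem : Sum.inl u ∈ gside N B ∪ pre N m := by simp [hu]
  refine ⟨?_, ⟨⟨Sum.inl u, by exact_mod_cast humem⟩⟩⟩
  have hreach : ∀ (w) (hw : w ∈ gside N B ∪ pre N m),
      ((appendPath G u (N+1)).induce ↑(gside N B ∪ pre N m)).Reachable
        ⟨w, by exact_mod_cast hw⟩ ⟨Sum.inl u, by exact_mod_cast humem⟩ := by
    intro w hw
    rcases Finset.mem_union.1 hw with hw1 | hw1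
    · rcases w with x | j
      swap
      · exact absurd hw1 inr_notMem_gside
      have hx : Sum.inl x ∈ gside N B := hw1
      have hr := hB'.preconnected ⟨Sum.inl x, by exact_mod_cast hx⟩
        ⟨Sum.inl u, by exact_mod_cast (inl_mem_gside.2 hu)⟩
      exact reachTransfer (f := id) (s1 := (↑(gside N B) : Set (V ⊕ Fin (N+1))))
        (s2 := (↑(gside N B ∪ pre N m) : Set (V ⊕ Fin (N+1))))
        (fun a ha => by exact_mod_cast Finset.mem_union_left _ (by exact_mod_cast ha))
        (fun a c _ _ h => h) (by exact_mod_cast hx)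
        (by exact_mod_cast (inl_mem_gside.2 hu)) hr
    · rcases w with x | j
      · exact absurd hw1 inl_notMem_pre
      have h0m : (Sum.inr (⟨0, by omega⟩ : Fin (N+1)) : V ⊕ Fin (N+1)) ∈ pre N m := by
        simp only [inr_mem_pre]; omega
      have hpc : ((appendPath G u (N+1)).induce ↑(pre N m : Finset (V ⊕ Fin (N+1)))).Connected :=
        pre_conn h1
      have hr0 := hpc.preconnected ⟨Sum.inr j, by exact_mod_cast hw1⟩
        ⟨Sum.inr ⟨0, by omega⟩, by exact_mod_cast h0m⟩
      have hr0' := reachTransfer (f := id) (s1 := (↑(pre N m : Finset (V ⊕ Fin (N+1))) : Set (V ⊕ Fin (N+1))))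
        (s2 := (↑(gside N B ∪ pre N m) : Set (V ⊕ Fin (N+1))))
        (fun a ha => by exact_mod_cast Finset.mem_union_right _ (by exact_mod_cast ha))
        (fun a c _ _ h => h) (by exact_mod_cast hw1) (by exact_mod_cast h0m) hr0
      have hadj : ((appendPath G u (N+1)).induce ↑(gside N B ∪ pre N m)).Adj
          ⟨Sum.inr ⟨0, by omega⟩, by exact_mod_cast Finset.mem_union_right _ h0m⟩
          ⟨Sum.inl u, by exact_mod_cast humem⟩ := by
        show (appendPath G u (N+1)).Adj (Sum.inr ⟨0, by omega⟩) (Sum.inl u)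
        rw [adj_inr_inl]
        exact ⟨rfl, rfl⟩
      exact hr0'.trans hadj.reachable
  rintro ⟨w, hw⟩ ⟨w2, hw2⟩
  exact (hreach w (by exact_mod_cast hw)).trans (hreach w2 (by exact_mod_cast hw2)).symm

end AppendAdj
section Structure6

variable {W1 W2 : Type*}

lemma connTransfer_full {H1 : SimpleGraph W1} {H2 : SimpleGraph W2} {s2 : Set W2}
    {f : W1 → W2} (hmap : ∀ x, f x ∈ s2)
    (hadj : ∀ x y, H1.Adj x y → H2.Adj (f x) (f y))
    (hsurj : ∀ y ∈ s2, ∃ x, f x = y)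
    (h : H1.Connected) : (H2.induce s2).Connected := by
  rw [connected_iff] at h ⊢
  obtain ⟨hpre, hne⟩ := h
  constructor
  · rintro ⟨a, ha⟩ ⟨b, hb⟩
    obtain ⟨x, rfl⟩ := hsurj a ha
    obtain ⟨y, rfl⟩ := hsurj b hb
    let F : H1 →g H2.induce s2 :=
      { toFun := fun p => ⟨f p, hmap p⟩
        map_rel' := by
          intro p q hpq
          exact hadj p q hpq }
    exact (hpre x y).map F
  · obtain ⟨x⟩ := hne
    exact ⟨⟨f x, hmap x⟩⟩

variable {V : Type} [Fintype V] [DecidableEq V] {N : ℕ} {G : SimpleGraph V} {u : V}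

lemma gside_univ_conn (hG : G.Connected) :
    ConnOn (appendPath G u (N+1)) ↑(gside N (Finset.univ : Finset V)) := by
  apply connTransfer_full (f := (Sum.inl : V → V ⊕ Fin (N+1)))
  · intro x
    exact_mod_cast inl_mem_gside.2 (Finset.mem_univ x)
  · intro x y h
    exact adj_inl_inl.2 h
  · intro y hy
    rcases y with x | j
    · exact ⟨x, rfl⟩
    · exact absurd (by exact_mod_cast hy) (inr_notMem_gside (B := Finset.univ))
  · exact hG

lemma gside_conn_of_set {s : Set V} (h : (G.induce s).Connected) {B : Finset V}
    (hBs : ∀ x, x ∈ B ↔ x ∈ s) :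
    ConnOn (appendPath G u (N+1)) ↑(gside N B) := by
  apply connTransfer (f := fun x : V => (Sum.inl x : V ⊕ Fin (N+1))) (s1 := s)
  · intro x hx
    exact_mod_cast inl_mem_gside.2 ((hBs x).2 hx)
  · intro x y _ _ hadj
    exact adj_inl_inl.2 hadj
  · intro y hy
    rcases y with x | j
    · exact ⟨x, (hBs x).1 (inl_mem_gside.1 (by exact_mod_cast hy)), rfl⟩
    · exact absurd (by exact_mod_cast hy) (inr_notMem_gside (B := B))
  · exact h

lemma both_sides_mem {t : Finset (V ⊕ Fin (N+1))}
    (hconn : ConnOn (appendPath G u (N+1)) ↑t)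
    {x : V} {j : Fin (N+1)} (hx : Sum.inl x ∈ t) (hj : Sum.inr j ∈ t) :
    Sum.inl u ∈ t ∧ (Sum.inr (⟨0, by omega⟩ : Fin (N+1)) : V ⊕ Fin (N+1)) ∈ t := by
  have hconn' : ((appendPath G u (N+1)).induce ↑t).Connected := hconn
  obtain ⟨p⟩ := hconn'.preconnected ⟨Sum.inl x, by exact_mod_cast hx⟩
    ⟨Sum.inr j, by exact_mod_cast hj⟩
  obtain ⟨c, d, hct, hcX, hdt, hdX, hadj⟩ :=
    exists_crossing (X := Set.range (Sum.inl : V → V ⊕ Fin (N+1))) p ⟨x, rfl⟩ (by simp)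
  obtain ⟨cx, rfl⟩ := hcX
  rcases d with dx | dj
  · exact absurd ⟨dx, rfl⟩ hdX
  rw [adj_inl_inr] at hadj
  obtain ⟨rfl, h0⟩ := hadj
  refine ⟨by exact_mod_cast hct, ?_⟩
  have hdj0 : dj = ⟨0, by omega⟩ := Fin.ext (by simpa using h0)
  rw [← hdj0]
  exact_mod_cast hdt

lemma downclosed {t : Finset (V ⊕ Fin (N+1))}
    (hconn : ConnOn (appendPath G u (N+1)) ↑t)
    (h0 : (Sum.inr (⟨0, by omega⟩ : Fin (N+1)) : V ⊕ Fin (N+1)) ∈ t)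
    {m : Fin (N+1)} (hm : Sum.inr m ∈ t) {b : Fin (N+1)} (hb : (b:ℕ) ≤ (m:ℕ)) :
    Sum.inr b ∈ t := by
  by_contra hbt
  have hb0 : 0 < (b:ℕ) := by
    rcases Nat.eq_zero_or_pos (b:ℕ) with h | h
    · exact absurd (show Sum.inr b ∈ t by
        rw [show b = (⟨0, by omega⟩ : Fin (N+1)) from Fin.ext h]; exact h0) hbt
    · exact h
  have hbm : (b:ℕ) < (m:ℕ) := by
    rcases Nat.lt_or_ge (b:ℕ) (m:ℕ) with h | h
    · exact h
    · exact absurd (show Sum.inr b ∈ t by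
        rw [show b = m from Fin.ext (by omega)]; exact hm) hbt
  have hconn' : ((appendPath G u (N+1)).induce ↑t).Connected := hconn
  obtain ⟨p⟩ := hconn'.preconnected ⟨Sum.inr m, by exact_mod_cast hm⟩
    ⟨Sum.inr ⟨0, by omega⟩, by exact_mod_cast h0⟩
  obtain ⟨c, d, hct, hcX, hdt, hdX, hadj⟩ :=
    exists_crossing (X := {w : V ⊕ Fin (N+1) | ∃ j : Fin (N+1), w = Sum.inr j ∧ (b:ℕ) < (j:ℕ)})
      p ⟨m, rfl, hbm⟩ (by rintro ⟨j, hj, hlt⟩; rw [Sum.inr.injEq] at hj; subst hj; simp at hlt)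
  obtain ⟨j, rfl, hjb⟩ := hcX
  rcases d with dx | dj
  · rw [adj_inr_inl] at hadj
    omega
  · rw [adj_inr_inr] at hadj
    have hdj : ¬ ((b:ℕ) < (dj:ℕ)) := fun hlt => hdX ⟨dj, rfl, hlt⟩
    rcases hadj with h | h
    · omega
    · have hdjb : dj = b := Fin.ext (by omega)
      rw [hdjb] at hdt
      exact hbt (by exact_mod_cast hdt)

end Structure6
section ClassLemma

variable {V : Type} [Fintype V] [DecidableEq V] {N : ℕ} {G : SimpleGraph V} {u : V}

lemma class_lemma (hN : 1 ≤ N) {B : Finset V} (hu : u ∈ B)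
    (hBconn : ConnOn (appendPath G u (N+1)) ↑(gside N B))
    (hcard : B.card = N + 1 ∨ B.card = N + 2) :
    ∀ t, CsgMove (appendPath G u (N+1)) (Set.Icc 1 N) (gside N B ∪ pre N (N+1)) t →
      csgGrundy (appendPath G u (N+1)) (Set.Icc 1 N) t ≠ B.card - (N+1) := by
  intro t ht
  set G' := appendPath G u (N+1) with hG'
  set s : Finset (V ⊕ Fin (N+1)) := gside N B ∪ pre N (N+1) with hs
  obtain ⟨hts, hSne, hkmem, hSconn, htor⟩ := ht
  rw [Set.mem_Icc] at hkmem
  have hscard : s.card = B.card + (N+1) := by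
    rw [hs, Finset.card_union_of_disjoint disj_gside_pre, card_gside, card_pre (le_refl _)]
  have hcs : (s \ t).card = s.card - t.card := Finset.card_sdiff_of_subset hts
  have htle := Finset.card_le_card hts
  have hBcard : N + 1 ≤ B.card := by rcases hcard with h | h <;> omega
  have htcard : t.card = B.card + (N+1) - (s \ t).card := by omega
  have htbig : N + 2 ≤ t.card := by omega
  have hinl : ∃ x : V, Sum.inl x ∈ t := by
    by_contra hno
    push_neg at hno
    have hsub : t ⊆ pre N (N+1) := by
      intro w hw
      rcases w with x | j
      · exact absurd hw (hno x)
      · simp [j.2]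
    have := Finset.card_le_card hsub
    rw [card_pre (le_refl _)] at this
    omega
  have hinr : ∃ j : Fin (N+1), Sum.inr j ∈ t := by
    by_contra hno
    push_neg at hno
    have hsub : t ⊆ gside N B := by
      intro w hw
      rcases w with x | j
      · have hws := hts hw
        rw [hs, Finset.mem_union] at hws
        rcases hws with h | h
        · exact h
        · exact absurd h inl_notMem_pre
      · exact absurd hw (hno j)
    have := Finset.card_le_card hsub
    rw [card_gside] at this
    omega
  obtain ⟨x0, hx0⟩ := hinl
  obtain ⟨j0, hj0⟩ := hinr
  have htconn : ConnOn G' ↑t := by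
    rcases htor with h | h
    · rw [h, Finset.card_empty] at htbig; omega
    · exact h
  obtain ⟨huT, h0T⟩ := both_sides_mem htconn hx0 hj0
  by_cases hSg : ∃ x : V, Sum.inl x ∈ s \ t
  · -- removed set on the graph side: the whole path stays in t
    have hSnoinr : ∀ j : Fin (N+1), Sum.inr j ∉ s \ t := by
      intro j hj
      obtain ⟨x1, hx1⟩ := hSg
      obtain ⟨-, h0S⟩ := both_sides_mem hSconn hx1 hj
      rw [Finset.mem_sdiff] at h0S
      exact h0S.2 h0T
    have hpret : pre N (N+1) ⊆ t := by
      intro w hw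
      rcases w with x | j
      · exact absurd hw inl_notMem_pre
      · by_contra hwt
        exact hSnoinr j (Finset.mem_sdiff.2
          ⟨by rw [hs]; exact Finset.mem_union_right _ hw, hwt⟩)
    have hk1 : 1 ≤ (s \ t).card := hkmem.1
    have hkN : (s \ t).card ≤ N := hkmem.2
    set k := (s \ t).card with hk
    set C : Finset (V ⊕ Fin (N+1)) := t \ pre N (N+1) with hC
    have hCcard : C.card = t.card - (N+1) := by
      rw [hC, Finset.card_sdiff_of_subset hpret, card_pre (le_refl _)]
    set t' : Finset (V ⊕ Fin (N+1)) := C ∪ pre N k with ht'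
    have hCnoinr : ∀ j : Fin (N+1), Sum.inr j ∉ C := by
      intro j hj
      rw [hC, Finset.mem_sdiff] at hj
      exact hj.2 (by simp [j.2])
    have ht'sub : t' ⊆ t := by
      intro w hw
      rw [ht', Finset.mem_union] at hw
      rcases hw with h | h
      · exact Finset.sdiff_subset (hC ▸ h)
      · refine hpret ?_
        rcases w with x | j
        · exact absurd h inl_notMem_pre
        · simp [j.2]
    have hdiff : t \ t' = suf N k := by
      ext w
      rcases w with x | j
      · simp only [Finset.mem_sdiff, ht', Finset.mem_union, hC]
        constructor
        · rintro ⟨hw, hw2⟩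
          exact absurd (Or.inl ⟨hw, inl_notMem_pre⟩) hw2
        · intro h; exact absurd h inl_notMem_suf
      · have hjt : Sum.inr j ∈ t := hpret (by simp [j.2])
        simp only [Finset.mem_sdiff, ht', Finset.mem_union, inr_mem_pre, inr_mem_suf]
        constructor
        · rintro ⟨-, hw2⟩
          push_neg at hw2
          have := hw2.2
          omega
        · intro hkj
          refine ⟨hjt, ?_⟩
          rintro (hj | hj)
          · exact hCnoinr j hj
          · omega
    have hdisjC : Disjoint C (pre N k) := by
      rw [Finset.disjoint_left]
      intro w hw hw2
      rcases w with x | j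
      · exact inl_notMem_pre hw2
      · exact hCnoinr j hw
    have ht'card : t'.card = B.card := by
      rw [ht', Finset.card_union_of_disjoint hdisjC, hCcard, card_pre (by omega)]
      omega
    have hc'mem : (Sum.inr (⟨k-1, by omega⟩ : Fin (N+1)) : V ⊕ Fin (N+1)) ∈ t' := by
      have : (Sum.inr (⟨k-1, by omega⟩ : Fin (N+1)) : V ⊕ Fin (N+1)) ∈ pre N k := by
        rw [inr_mem_pre]
        show k - 1 < k
        omega
      show (Sum.inr (⟨k-1, by omega⟩ : Fin (N+1)) : V ⊕ Fin (N+1)) ∈ C ∪ pre N k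
      exact Finset.mem_union_right _ this
    have ht'conn : ConnOn G' ↑t' := by
      show (G'.induce (↑t' : Set (V ⊕ Fin (N+1)))).Connected
      apply sep_conn (t := (↑t : Set (V ⊕ Fin (N+1)))) (X := (↑t' : Set (V ⊕ Fin (N+1))))
        (c := (Sum.inr (⟨k-1, by omega⟩ : Fin (N+1)) : V ⊕ Fin (N+1)))
        (Finset.coe_subset.2 ht'sub) (by exact_mod_cast hc'mem) ?_ htconn
      intro a b ha hb hbX hadj
      have hbsuf : b ∈ suf N k := by
        rw [← hdiff, Finset.mem_sdiff]
        exact ⟨by exact_mod_cast hb, fun h => hbX (by exact_mod_cast h)⟩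
      rcases b with bx | bj
      · exact absurd hbsuf inl_notMem_suf
      have hbj : k ≤ (bj:ℕ) := by simpa using hbsuf
      rcases a with ax | aj
      · rw [hG', adj_inl_inr] at hadj
        omega
      · rw [hG', adj_inr_inr] at hadj
        have haj : (aj:ℕ) < k := by
          have hmem : Sum.inr aj ∈ t' := by exact_mod_cast ha
          rw [ht', Finset.mem_union] at hmem
          rcases hmem with h | h
          · exact absurd h (hCnoinr aj)
          · simpa using h
        have haj1 : (aj:ℕ) = k - 1 := by omega
        rw [Sum.inr.injEq]
        exact Fin.ext (show (aj:ℕ) = k - 1 from haj1)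
    have hmove : CsgMove G' (Set.Icc 1 N) t t' := by
      refine ⟨ht'sub, ?_, ?_, ?_, Or.inr ht'conn⟩
      · rw [hdiff]
        exact ⟨Sum.inr ⟨k, by omega⟩, by simp⟩
      · rw [hdiff, card_suf (by omega), Set.mem_Icc]
        omega
      · rw [hdiff]
        exact suf_conn (by omega)
    have hgne := grundy_ne G' (Set.Icc 1 N) hmove
    have hval : csgGrundy G' (Set.Icc 1 N) t' = B.card - (N+1) := by
      rcases hcard with h | h
      · rw [h, show N+1-(N+1) = 0 by omega]
        exact grundy_card_N1 G' t' ht'conn (by omega)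
      · rw [h, show N+2-(N+1) = 1 by omega]
        exact grundy_card_N2 G' hN t' ht'conn (by omega)
    intro h
    exact hgne (by rw [hval, h])
  · -- removed set on the path side: the whole graph side stays in t
    push_neg at hSg
    have hgsub : gside N B ⊆ t := by
      intro w hw
      rcases w with x | j
      · by_contra hwt
        exact hSg x (Finset.mem_sdiff.2
          ⟨by rw [hs]; exact Finset.mem_union_left _ hw, hwt⟩)
      · exact absurd hw inr_notMem_gside
    set R : Finset (V ⊕ Fin (N+1)) := t \ gside N B with hR
    have hRcard : R.card = t.card - B.card := by
      rw [hR, Finset.card_sdiff_of_subset hgsub, card_gside]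
    have h0R : (Sum.inr (⟨0, by omega⟩ : Fin (N+1)) : V ⊕ Fin (N+1)) ∈ R := by
      rw [hR, Finset.mem_sdiff]
      exact ⟨h0T, inr_notMem_gside⟩
    have hRconn : ConnOn G' ↑R := by
      rw [hG']
      apply interval_conn (b := (⟨0, by omega⟩ : Fin (N+1))) h0R
      · intro w hw
        rcases w with x | j
        · rw [hR, Finset.mem_sdiff] at hw
          have hgw : Sum.inl x ∈ gside N B := by
            have hws := hts hw.1
            rw [hs, Finset.mem_union] at hws
            rcases hws with h | h
            · exact h
            · exact absurd h inl_notMem_pre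
          exact absurd hgw hw.2
        · exact ⟨j, rfl, by simp⟩
      · intro j hj j' _ hle
        have hjt : Sum.inr j ∈ t := by
          rw [hR, Finset.mem_sdiff] at hj
          exact hj.1
        have hj't := downclosed htconn h0T hjt (b := j') hle
        rw [hR, Finset.mem_sdiff]
        exact ⟨hj't, inr_notMem_gside⟩
    have hmove : CsgMove G' (Set.Icc 1 N) t (gside N B) := by
      refine ⟨hgsub, ?_, ?_, ?_, Or.inr hBconn⟩
      · exact ⟨_, hR ▸ h0R⟩
      · rw [← hR, Set.mem_Icc, hRcard]
        omega
      · rw [← hR]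
        exact hRconn
    have hgne := grundy_ne G' (Set.Icc 1 N) hmove
    have hval : csgGrundy G' (Set.Icc 1 N) (gside N B) = B.card - (N+1) := by
      rcases hcard with h | h
      · rw [h, show N+1-(N+1) = 0 by omega]
        exact grundy_card_N1 G' _ hBconn (by rw [card_gside, h])
      · rw [h, show N+2-(N+1) = 1 by omega]
        exact grundy_card_N2 G' hN _ hBconn (by rw [card_gside, h])
    intro h
    exact hgne (by rw [hval, h])

end ClassLemma
section Endgame

variable {V : Type} [Fintype V] [DecidableEq V] {N : ℕ} {G : SimpleGraph V} {u : V}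

lemma lemmaE (hN : 1 ≤ N) {B : Finset V} (hu : u ∈ B)
    (hBconn : ConnOn (appendPath G u (N+1)) ↑(gside N B)) (hBcard : B.card = N + 1) :
    csgGrundy (appendPath G u (N+1)) (Set.Icc 1 N) (gside N B ∪ pre N (N+1)) = 0 := by
  apply grundy_eq_zero
  intro t ht
  have hcl := class_lemma hN hu hBconn (Or.inl hBcard) t ht
  rwa [hBcard, show N+1-(N+1) = 0 by omega] at hcl

lemma lemmaF (hN : 1 ≤ N) (hG : G.Connected) (hVcard : Fintype.card V = N + 2) :
    csgGrundy (appendPath G u (N+1)) (Set.Icc 1 N)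
      (Finset.univ : Finset (V ⊕ Fin (N+1))) = 1 := by
  rw [univ_eq_gside_pre]
  have hgconn := gside_univ_conn (u := u) (N := N) hG
  apply grundy_eq_one
  · obtain ⟨w, hwu, hwconn⟩ := exists_noncut hG u (by omega)
    set B : Finset V := Finset.univ.erase w with hB
    have hBcard : B.card = N + 1 := by
      rw [hB, Finset.card_erase_of_mem (Finset.mem_univ w), Finset.card_univ, hVcard]; omega
    have hBconn : ConnOn (appendPath G u (N+1)) ↑(gside N B) := by
      apply gside_conn_of_set hwconn
      intro x
      rw [hB]
      simp [Finset.mem_erase]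
    have huB : u ∈ B := by
      rw [hB]; exact Finset.mem_erase.2 ⟨Ne.symm hwu, Finset.mem_univ u⟩
    refine ⟨gside N B ∪ pre N (N+1), ?_, lemmaE hN huB hBconn hBcard⟩
    have hdiff : (gside N Finset.univ ∪ pre N (N+1)) \ (gside N B ∪ pre N (N+1))
        = {Sum.inl w} := by
      ext v'
      rcases v' with x | j
      · rw [Finset.mem_sdiff, Finset.mem_union, Finset.mem_union, Finset.mem_singleton]
        constructor
        · rintro ⟨-, h2⟩
          by_contra hne
          have hxB : Sum.inl x ∈ gside N B := by
            rw [inl_mem_gside, hB, Finset.mem_erase]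
            exact ⟨fun he => hne (by rw [he]), Finset.mem_univ x⟩
          exact h2 (Or.inl hxB)
        · intro h
          have hxw : x = w := Sum.inl.inj h
          subst hxw
          refine ⟨Or.inl (by simp), ?_⟩
          rintro (hg | hp)
          · rw [inl_mem_gside, hB, Finset.mem_erase] at hg
            exact hg.1 rfl
          · exact inl_notMem_pre hp
      · rw [Finset.mem_sdiff, Finset.mem_union, Finset.mem_union, Finset.mem_singleton]
        constructor
        · rintro ⟨-, h2⟩
          exact absurd (Or.inr (by simp [j.2])) h2
        · intro h
          exact absurd h (by simp)
    refine ⟨?_, ?_, ?_, ?_, Or.inr (glue_conn hBconn huB (by omega))⟩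
    · intro w' hw'
      rw [Finset.mem_union] at hw' ⊢
      rcases hw' with h | h
      · left
        rcases w' with x | j
        · simp
        · exact absurd h inr_notMem_gside
      · right; exact h
    · rw [hdiff]
      exact ⟨Sum.inl w, Finset.mem_singleton_self _⟩
    · rw [hdiff, Finset.card_singleton, Set.mem_Icc]
      omega
    · rw [hdiff]
      exact connOn_fin_singleton _ _
  · intro t ht
    have hcl := class_lemma hN (Finset.mem_univ u) hgconn
      (Or.inr (by rw [Finset.card_univ, hVcard])) t ht
    rwa [Finset.card_univ, hVcard, show N+2-(N+1) = 1 by omega] at hcl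

end Endgame

/-- Grundy values of CSG({1,…,N}) on a connected graph `G` with a path of `N+1`
vertices appended at a vertex `u`, according to the number of vertices of `G`. -/
theorem stmt7 (N : ℕ) (hN : 1 ≤ N) (V : Type) [Fintype V] [DecidableEq V]
    (G : SimpleGraph V) (hG : G.Connected) (u : V) :
    (Fintype.card V ≤ 1 →
      csgGrundy (appendPath G u (N + 1)) (Set.Icc 1 N) Finset.univ = Fintype.card V) ∧
    (2 ≤ Fintype.card V → Fintype.card V ≤ N →
      2 ≤ csgGrundy (appendPath G u (N + 1)) (Set.Icc 1 N) Finset.univ) ∧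
    (Fintype.card V = N + 1 →
      csgGrundy (appendPath G u (N + 1)) (Set.Icc 1 N) Finset.univ = 0) ∧
    (Fintype.card V = N + 2 →
      csgGrundy (appendPath G u (N + 1)) (Set.Icc 1 N) Finset.univ = 1) := by
  have hV1 : 1 ≤ Fintype.card V := Fintype.card_pos_iff.2 hG.nonempty
  refine ⟨?_, ?_, ?_, ?_⟩
  · intro h1
    have hc : Fintype.card V = 1 := le_antisymm h1 hV1
    have hcardW : (Finset.univ : Finset (V ⊕ Fin (N+1))).card = N + 2 := by
      rw [Finset.card_univ, Fintype.card_sum, Fintype.card_fin, hc]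
      omega
    have hconnW : ConnOn (appendPath G u (N+1)) ↑(Finset.univ : Finset (V ⊕ Fin (N+1))) := by
      rw [univ_eq_gside_pre]
      exact glue_conn (gside_univ_conn hG) (Finset.mem_univ u) (by omega)
    rw [grundy_card_N2 _ hN _ hconnW hcardW, hc]
  · intro h2 hN'
    apply grundy_ge_two'
    · have hd : (Finset.univ : Finset (V ⊕ Fin (N+1))) \ pre N (N+1) = gside N Finset.univ := by
        ext w'
        rcases w' with x | j
        · simp
        · simp [j.2]
      refine ⟨pre N (N+1), ⟨Finset.subset_univ _, ?_, ?_, ?_, Or.inr (pre_conn (by omega))⟩, ?_⟩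
      · rw [hd]
        exact ⟨Sum.inl u, by simp⟩
      · rw [hd, card_gside, Finset.card_univ, Set.mem_Icc]
        omega
      · rw [hd]
        exact gside_univ_conn hG
      · exact grundy_card_N1 _ _ (pre_conn (by omega)) (card_pre (le_refl _))
    · have hm1 : 1 ≤ N + 2 - Fintype.card V := by omega
      have hd : (Finset.univ : Finset (V ⊕ Fin (N+1)))
          \ (gside N Finset.univ ∪ pre N (N + 2 - Fintype.card V))
          = suf N (N + 2 - Fintype.card V) := by
        ext w'
        rcases w' with x | j
        · simp
        · simp only [Finset.mem_sdiff, Finset.mem_univ, true_and, Finset.mem_union,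
            inr_mem_pre, inr_mem_suf]
          have := j.2
          constructor
          · intro h
            push_neg at h
            omega
          · intro h
            rintro (hg | hp)
            · exact inr_notMem_gside hg
            · omega
      refine ⟨gside N Finset.univ ∪ pre N (N + 2 - Fintype.card V),
        ⟨Finset.subset_univ _, ?_, ?_, ?_,
          Or.inr (glue_conn (gside_univ_conn hG) (Finset.mem_univ u) hm1)⟩, ?_⟩
      · rw [hd]
        refine ⟨Sum.inr ⟨N + 2 - Fintype.card V, by omega⟩, ?_⟩
        rw [inr_mem_suf]
      · rw [hd, card_suf (by omega), Set.mem_Icc]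
        omega
      · rw [hd]
        exact suf_conn (by omega)
      · apply grundy_card_N2 _ hN _ (glue_conn (gside_univ_conn hG) (Finset.mem_univ u) hm1)
        rw [Finset.card_union_of_disjoint disj_gside_pre, card_gside, Finset.card_univ,
          card_pre (by omega)]
        omega
  · intro hc
    rw [univ_eq_gside_pre]
    apply lemmaE hN (Finset.mem_univ u) (gside_univ_conn hG)
    rw [Finset.card_univ, hc]
  · intro hc
    exact lemmaF hN hG hc
end
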